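/- arXiv:1009.0488 — 2 statements merged into one kernel-verified Lean document; each statement's English description precedes it below -/
import Mathlib

section
/- Let τ be an algebraic integer with norm N(τ) and let w ≥ 1. A representative Σ_{j=0}^{w-1} a_j τ^j with a_j ∈ {0, ..., |N(τ)|−1} is divisible by τ in Z[τ] if and only if a_0 = 0. Consequently, a reduced residue digit set modulo τ^w (consisting of 0 and one representative of each residue class modulo τ^w not divisible by τ) has cardinality |N(τ)|^{w−1}(|N(τ)|−1) + 1. -/
/-!
Everything rests on `ℤ[τ]/(τ) ≅ ℤ/cℤ`, where `c = ±N(τ)` is the constant coefficient of the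
minimal polynomial of `τ`: every element of `ℤ[τ]` is congruent modulo `τ` to its constant term,
and `τ` divides an integer `n` in `ℤ[τ]` iff `c ∣ n` (since `ℤ` is integrally closed, the minimal
polynomial divides every integer polynomial vanishing at `τ`). Peeling off one digit at a time, and
cancelling `τ`, every class modulo `τ^w` then has exactly one `τ`-adic representative with digits
in `[0, |c|)`, and it is divisible by `τ` iff its lowest digit vanishes. The nonzero elements of a
reduced residue digit set thus correspond to the `|c|^(w-1) (|c| - 1)` digit vectors with nonzero
lowest digit.
-/

open Polynomial

/-- `D` is a reduced residue digit set modulo `τ^w`: it consists of `0` together with exactly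
one representative of every residue class of `ℤ[τ]` modulo `τ^w` that is not divisible by `τ`. -/
def IsReducedResidueDigitSet (τ : ℂ) (w : ℕ) (D : Finset ℂ) : Prop :=
  (0 : ℂ) ∈ D ∧
  (∀ d ∈ D, d ∈ Algebra.adjoin ℤ ({τ} : Set ℂ)) ∧
  (∀ d ∈ D, d ≠ 0 → ¬ ∃ x ∈ Algebra.adjoin ℤ ({τ} : Set ℂ), d = τ * x) ∧
  (∀ d₁ ∈ D, ∀ d₂ ∈ D, d₁ ≠ 0 → d₂ ≠ 0 →
    (∃ x ∈ Algebra.adjoin ℤ ({τ} : Set ℂ), d₁ - d₂ = τ ^ w * x) → d₁ = d₂) ∧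
  (∀ z ∈ Algebra.adjoin ℤ ({τ} : Set ℂ),
    (¬ ∃ x ∈ Algebra.adjoin ℤ ({τ} : Set ℂ), z = τ * x) →
    ∃ d ∈ D, ∃ x ∈ Algebra.adjoin ℤ ({τ} : Set ℂ), z - d = τ ^ w * x)

/- In this section `hc` and `hrep` say that `ℤ → R ⧸ (t)` is surjective with kernel `cℤ`. -/
section Digits

variable {R : Type*} [CommRing R]

def digitSum (t : R) {w : ℕ} (a : Fin w → ℤ) : R :=
  ∑ j, (a j : R) * t ^ (j : ℕ)

theorem digitSum_succ (t : R) {w : ℕ} (a : Fin (w + 1) → ℤ) :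
    digitSum t a = a 0 + t * digitSum t (Fin.tail a) := by
  simp only [digitSum, Fin.sum_univ_succ, Fin.val_zero, pow_zero, mul_one, Finset.mul_sum,
    Fin.val_succ, pow_succ', Fin.tail]
  congr 1
  exact Finset.sum_congr rfl fun j _ => by ring

theorem map_digitSum {S : Type*} [CommRing S] (f : R →+* S) (t : R) {w : ℕ} (a : Fin w → ℤ) :
    f (digitSum t a) = digitSum (f t) a := by
  simp [digitSum]

variable {t : R} {c : ℤ}

theorem eq_of_dvd_intCast_sub (hc : ∀ n : ℤ, t ∣ (n : R) ↔ c ∣ n) {m n : ℤ}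
    (hm : 0 ≤ m ∧ m < |c|) (hn : 0 ≤ n ∧ n < |c|) (h : t ∣ (m : R) - n) : m = n := by
  rw [← Int.cast_sub, hc, ← abs_dvd] at h
  have := Int.eq_zero_of_abs_lt_dvd h (by rw [abs_lt]; omega)
  omega

theorem dvd_digitSum_iff (hc : ∀ n : ℤ, t ∣ (n : R) ↔ c ∣ n) {w : ℕ} {a : Fin (w + 1) → ℤ}
    (ha : ∀ j, 0 ≤ a j ∧ a j < |c|) : t ∣ digitSum t a ↔ a 0 = 0 := by
  rw [digitSum_succ, dvd_add_left (dvd_mul_right t _)]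
  refine ⟨fun h => eq_of_dvd_intCast_sub hc (ha 0) ⟨le_rfl, by linarith [ha 0]⟩ (by simpa), ?_⟩
  intro h
  simp [h]

theorem exists_dvd_sub_digitSum (hc : ∀ n : ℤ, t ∣ (n : R) ↔ c ∣ n) (hc0 : c ≠ 0)
    (hrep : ∀ z : R, ∃ n : ℤ, t ∣ z - n) (w : ℕ) (z : R) :
    ∃ a : Fin w → ℤ, (∀ j, 0 ≤ a j ∧ a j < |c|) ∧ t ^ w ∣ z - digitSum t a := by
  induction w generalizing z with
  | zero => exact ⟨finZeroElim, finZeroElim, by simp⟩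
  | succ w ih =>
    obtain ⟨n, hn⟩ := hrep z
    have hmod : t ∣ z - (n % |c| : ℤ) := by
      have : t ∣ ((n - n % |c| : ℤ) : R) := (hc _).2 <| by
        rw [Int.emod_def, sub_sub_cancel, ← abs_dvd]; exact dvd_mul_right _ _
      simpa using dvd_add hn this
    obtain ⟨y, hy⟩ := hmod
    obtain ⟨a, ha, hdvd⟩ := ih y
    refine ⟨Fin.cons (n % |c|) a, fun j => ?_, ?_⟩
    · cases j using Fin.cases with
      | zero => exact ⟨Int.emod_nonneg _ (abs_ne_zero.2 hc0), Int.emod_lt_of_pos _ (abs_pos.2 hc0)⟩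
      | succ j => simpa using ha j
    · rw [digitSum_succ, Fin.cons_zero, Fin.tail_cons, pow_succ',
        show z - _ = t * (y - digitSum t a) by linear_combination hy]
      exact mul_dvd_mul_left t hdvd

theorem eq_of_dvd_digitSum_sub [IsDomain R] (ht : t ≠ 0) (hc : ∀ n : ℤ, t ∣ (n : R) ↔ c ∣ n)
    {w : ℕ} {a b : Fin w → ℤ} (ha : ∀ j, 0 ≤ a j ∧ a j < |c|) (hb : ∀ j, 0 ≤ b j ∧ b j < |c|)
    (h : t ^ w ∣ digitSum t a - digitSum t b) : a = b := by
  induction w with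
  | zero => exact funext finZeroElim
  | succ w ih =>
    rw [digitSum_succ, digitSum_succ, pow_succ',
      show ∀ x y u v : R, x + t * u - (y + t * v) = (x - y) + t * (u - v) by intros; ring] at h
    have h0 : a 0 = b 0 := eq_of_dvd_intCast_sub hc (ha 0) (hb 0) <|
      (dvd_add_left (dvd_mul_right t _)).1 (dvd_trans (dvd_mul_right t _) h)
    rw [h0, sub_self, zero_add, mul_dvd_mul_iff_left ht] at h
    have htail : Fin.tail a = Fin.tail b := ih (fun j => ha j.succ) (fun j => hb j.succ) h
    rw [← Fin.cons_self_tail a, ← Fin.cons_self_tail b, h0, htail]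

noncomputable def digitTuplesHeadNeZero (m : ℤ) (w : ℕ) : Finset (Fin (w + 1) → ℤ) :=
  Fintype.piFinset (Fin.cons (Finset.Ico 1 m) fun _ => Finset.Ico 0 m)

theorem mem_digitTuplesHeadNeZero_iff {m : ℤ} {w : ℕ} {a : Fin (w + 1) → ℤ} :
    a ∈ digitTuplesHeadNeZero m w ↔ (∀ j, 0 ≤ a j ∧ a j < m) ∧ a 0 ≠ 0 := by
  simp only [digitTuplesHeadNeZero, Fintype.mem_piFinset, Fin.forall_fin_succ, Fin.cons_zero,
    Fin.cons_succ, Finset.mem_Ico]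
  grind

theorem card_digitTuplesHeadNeZero {m : ℤ} (hm : 0 < m) (w : ℕ) :
    ((digitTuplesHeadNeZero m w).card : ℤ) = m ^ w * (m - 1) := by
  simp only [digitTuplesHeadNeZero, Fintype.card_piFinset, Fin.prod_univ_succ, Fin.cons_zero,
    Fin.cons_succ, Finset.prod_const, Finset.card_univ, Fintype.card_fin, Int.card_Ico]
  push_cast
  rw [Int.toNat_of_nonneg (by omega), Int.toNat_of_nonneg (by omega), sub_zero, mul_comm]

structure IsReducedDigitSet (t : R) (w : ℕ) (D : Finset R) : Prop where
  zero_mem : 0 ∈ D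
  not_dvd : ∀ d ∈ D, d ≠ 0 → ¬ t ∣ d
  eq_of_dvd_sub : ∀ d₁ ∈ D, ∀ d₂ ∈ D, d₁ ≠ 0 → d₂ ≠ 0 → t ^ w ∣ d₁ - d₂ → d₁ = d₂
  exists_dvd_sub : ∀ z, ¬ t ∣ z → ∃ d ∈ D, t ^ w ∣ z - d

theorem IsReducedDigitSet.card_eq [IsDomain R] (ht : t ≠ 0)
    (hc : ∀ n : ℤ, t ∣ (n : R) ↔ c ∣ n) (hc0 : c ≠ 0) (hrep : ∀ z : R, ∃ n : ℤ, t ∣ z - n)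
    {w : ℕ} {D : Finset R} (hD : IsReducedDigitSet t (w + 1) D) :
    (D.card : ℤ) = |c| ^ w * (|c| - 1) + 1 := by
  classical
  choose dig hdig hdig_dvd using exists_dvd_sub_digitSum hc hc0 hrep (w + 1)
  have dig_eq_iff (z z' : R) : dig z = dig z' ↔ t ^ (w + 1) ∣ z - z' := by
    refine ⟨fun h => ?_, fun h => eq_of_dvd_digitSum_sub ht hc (hdig z) (hdig z') ?_⟩
    · simpa [h] using dvd_sub (hdig_dvd z) (hdig_dvd z')
    · convert dvd_add (dvd_sub h (hdig_dvd z)) (hdig_dvd z') using 1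
      ring
  have dvd_iff (z : R) : t ∣ z ↔ dig z 0 = 0 := by
    rw [← dvd_digitSum_iff hc (hdig z),
      ← dvd_sub_left ((dvd_pow_self t w.succ_ne_zero).trans (hdig_dvd z))]
    simp
  have hcard : (D.erase 0).card = (digitTuplesHeadNeZero |c| w).card := by
    refine Finset.card_nbij dig (fun d hd => ?_) (fun d₁ hd₁ d₂ hd₂ h => ?_) (fun b hb => ?_)
    · obtain ⟨hd0, hdD⟩ := Finset.mem_erase.1 hd
      exact mem_digitTuplesHeadNeZero_iff.2
        ⟨hdig d, fun h => hD.not_dvd d hdD hd0 ((dvd_iff d).2 h)⟩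
    · obtain ⟨hd₁0, hd₁D⟩ := Finset.mem_erase.1 hd₁
      obtain ⟨hd₂0, hd₂D⟩ := Finset.mem_erase.1 hd₂
      exact hD.eq_of_dvd_sub d₁ hd₁D d₂ hd₂D hd₁0 hd₂0 ((dig_eq_iff _ _).1 h)
    · obtain ⟨hb, hb0⟩ := mem_digitTuplesHeadNeZero_iff.1 hb
      have hdig_b : dig (digitSum t b) = b :=
        eq_of_dvd_digitSum_sub ht hc (hdig _) hb (dvd_sub_comm.1 (hdig_dvd _))
      have hndvd : ¬ t ∣ digitSum t b := by rw [dvd_iff, hdig_b]; exact hb0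
      obtain ⟨d, hdD, hbd⟩ := hD.exists_dvd_sub _ hndvd
      have hd0 : d ≠ 0 := by
        rintro rfl
        exact hndvd ((dvd_pow_self t w.succ_ne_zero).trans (by simpa using hbd))
      exact ⟨d, Finset.mem_erase.2 ⟨hd0, hdD⟩,
        ((dig_eq_iff _ _).2 (dvd_sub_comm.1 hbd)).trans hdig_b⟩
  rw [← Finset.card_erase_add_one hD.zero_mem, Nat.cast_succ, hcard,
    card_digitTuplesHeadNeZero (abs_pos.2 hc0)]

end Digits

section Adjoin

variable {R S : Type*} [CommRing R] [CommRing S] [Algebra R S]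

theorem dvd_aeval_sub_algebraMap_coeff_zero (x : S) (p : R[X]) :
    x ∣ aeval x p - algebraMap R S (p.coeff 0) := by
  simpa using map_dvd (aeval x) (X_dvd_sub_C (p := p))

theorem Subalgebra.exists_mem_eq_mul_iff_dvd {A : Subalgebra R S} (s y : A) :
    (∃ x ∈ A, (y : S) = s * x) ↔ s ∣ y :=
  ⟨fun ⟨x, hx, h⟩ => ⟨⟨x, hx⟩, Subtype.ext h⟩, fun ⟨x, h⟩ => ⟨x, x.2, congrArg Subtype.val h⟩⟩

variable (R) in
abbrev adjoinSelf (τ : S) : Algebra.adjoin R {τ} := ⟨τ, Algebra.self_mem_adjoin_singleton R τ⟩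

variable {τ : S}

theorem exists_aeval_adjoinSelf_eq (z : Algebra.adjoin R {τ}) :
    ∃ p : R[X], aeval (adjoinSelf R τ) p = z := by
  obtain ⟨p, hp⟩ : (z : S) ∈ (aeval (R := R) τ).range := by
    rw [← Algebra.adjoin_singleton_eq_range_aeval]; exact z.2
  exact ⟨p, Subtype.ext (by rw [aeval_subalgebra_coe]; exact hp)⟩

theorem exists_adjoinSelf_dvd_sub_algebraMap (z : Algebra.adjoin R {τ}) :
    ∃ r : R, adjoinSelf R τ ∣ z - algebraMap R _ r := by
  obtain ⟨p, rfl⟩ := exists_aeval_adjoinSelf_eq z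
  exact ⟨_, dvd_aeval_sub_algebraMap_coeff_zero _ p⟩

theorem minpoly_coeff_zero_ne_zero [IsDomain R] [IsDomain S] (hint : IsIntegral R τ)
    (hτ : τ ≠ 0) : (minpoly R τ).coeff 0 ≠ 0 := by
  intro h0
  obtain ⟨q, hq⟩ := X_dvd_iff.2 h0
  have hq_unit : IsUnit q :=
    ((minpoly.irreducible hint).isUnit_or_isUnit hq).resolve_left not_isUnit_X
  have : τ * aeval τ q = 0 := by simpa [hq] using minpoly.aeval R τ
  exact (hq_unit.map (aeval τ)).ne_zero ((mul_eq_zero.1 this).resolve_left hτ)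

theorem adjoinSelf_dvd_algebraMap_iff [IsDomain R] [IsIntegrallyClosed R] [IsDomain S]
    [Module.IsTorsionFree R S] (hint : IsIntegral R τ) (r : R) :
    adjoinSelf R τ ∣ algebraMap R _ r ↔ (minpoly R τ).coeff 0 ∣ r := by
  constructor
  · rintro ⟨x, hx⟩
    obtain ⟨q, rfl⟩ := exists_aeval_adjoinSelf_eq x
    have hroot : aeval τ (C r - X * q) = 0 := by
      have := congrArg Subtype.val hx
      simp only [Subalgebra.coe_algebraMap, Subalgebra.coe_mul, aeval_subalgebra_coe] at this
      simp [this]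
    simpa using map_dvd constantCoeff (minpoly.isIntegrallyClosed_dvd hint hroot)
  · rintro ⟨k, rfl⟩
    have hgen : aeval (adjoinSelf R τ) (minpoly R τ) = 0 :=
      Subtype.ext (by simp [aeval_subalgebra_coe])
    have := dvd_aeval_sub_algebraMap_coeff_zero (adjoinSelf R τ) (minpoly R τ)
    rw [hgen, zero_sub, dvd_neg] at this
    simpa using this.mul_right (algebraMap R _ k)

end Adjoin

open Classical in
theorem IsReducedResidueDigitSet.isReducedDigitSet {τ : ℂ} {w : ℕ} {D : Finset ℂ}
    (hD : IsReducedResidueDigitSet τ w D) :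
    IsReducedDigitSet (adjoinSelf ℤ τ) w (D.subtype (· ∈ Algebra.adjoin ℤ {τ})) := by
  obtain ⟨h0, hmem, hnd, hinj, hsurj⟩ := hD
  refine ⟨Finset.mem_subtype.2 h0, fun d hd hd0 h => ?_,
    fun d₁ h₁ d₂ h₂ h₁0 h₂0 h => ?_, fun z hz => ?_⟩
  · exact hnd d (Finset.mem_subtype.1 hd) (by exact_mod_cast hd0)
      ((Subalgebra.exists_mem_eq_mul_iff_dvd _ _).2 h)
  · have h' := (Subalgebra.exists_mem_eq_mul_iff_dvd _ _).2 h
    push_cast at h'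
    exact Subtype.ext (hinj _ (Finset.mem_subtype.1 h₁) _ (Finset.mem_subtype.1 h₂)
      (by exact_mod_cast h₁0) (by exact_mod_cast h₂0) h')
  · obtain ⟨d, hd, x, hx, hzd⟩ :=
      hsurj z z.2 fun h => hz ((Subalgebra.exists_mem_eq_mul_iff_dvd _ _).1 h)
    exact ⟨⟨d, hmem d hd⟩, Finset.mem_subtype.2 hd,
      (Subalgebra.exists_mem_eq_mul_iff_dvd _ _).1 ⟨x, hx, by push_cast; exact hzd⟩⟩

open Classical in
theorem IsReducedResidueDigitSet.card_subtype {τ : ℂ} {w : ℕ} {D : Finset ℂ}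
    (hD : IsReducedResidueDigitSet τ w D) :
    (D.subtype (· ∈ Algebra.adjoin ℤ {τ})).card = D.card := by
  rw [Finset.card_subtype, Finset.filter_true_of_mem hD.2.1]

/-- A representative `∑_{j<w} a_j τ^j` with `a_j ∈ {0, …, |Nτ|-1}` is divisible by `τ` in
`ℤ[τ]` if and only if `a_0 = 0`. Consequently, any reduced residue digit set modulo `τ^w`
has cardinality `|Nτ|^(w-1) (|Nτ|-1) + 1`. -/
theorem representative_div_iff_and_card_digit_set
    (τ : ℂ) (hint : IsIntegral ℤ τ) (hτ : 1 < ‖τ‖)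
    (Nτ : ℤ) (hN : (minpoly ℤ τ).coeff 0 = (-1) ^ (minpoly ℤ τ).natDegree * Nτ)
    (w : ℕ) (hw : 1 ≤ w) :
    (∀ a : Fin w → ℤ, (∀ j, 0 ≤ a j ∧ a j < |Nτ|) →
      ((∃ x ∈ Algebra.adjoin ℤ ({τ} : Set ℂ),
          ∑ j : Fin w, (a j : ℂ) * τ ^ (j : ℕ) = τ * x) ↔ a ⟨0, by omega⟩ = 0)) ∧
    (∀ D : Finset ℂ, IsReducedResidueDigitSet τ w D →
      (D.card : ℤ) = |Nτ| ^ (w - 1) * (|Nτ| - 1) + 1) := by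
  obtain ⟨v, rfl⟩ : ∃ v, w = v + 1 := ⟨w - 1, by omega⟩
  have hτ0 : τ ≠ 0 := by rintro rfl; norm_num at hτ
  have habs : |(minpoly ℤ τ).coeff 0| = |Nτ| := by simp [hN, abs_mul]
  have hc (n : ℤ) : adjoinSelf ℤ τ ∣ (n : Algebra.adjoin ℤ {τ}) ↔ (minpoly ℤ τ).coeff 0 ∣ n := by
    simpa using adjoinSelf_dvd_algebraMap_iff hint n
  have hrep (z : Algebra.adjoin ℤ {τ}) : ∃ n : ℤ, adjoinSelf ℤ τ ∣ z - n := by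
    simpa using exists_adjoinSelf_dvd_sub_algebraMap z
  refine ⟨fun a ha => ?_, fun D hD => ?_⟩
  · rw [← habs] at ha
    have hsum : ((digitSum (adjoinSelf ℤ τ) a : Algebra.adjoin ℤ {τ}) : ℂ) = digitSum τ a :=
      map_digitSum (Algebra.adjoin ℤ {τ}).val.toRingHom _ a
    refine Iff.trans ?_ (dvd_digitSum_iff hc ha)
    rw [← Subalgebra.exists_mem_eq_mul_iff_dvd, hsum]
    rfl
  · rw [← habs, ← hD.card_subtype, Nat.add_sub_cancel]
    exact hD.isReducedDigitSet.card_eq (fun h => hτ0 (congrArg Subtype.val h)) hc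
      (minpoly_coeff_zero_ne_zero hint hτ0) hrep
end

section
/- Let τ be an imaginary quadratic algebraic integer and V the Voronoi cell of 0 for the lattice Z[τ]. Then the Lebesgue measure of V equals |Im τ|. -/
/-!
For a closed subgroup `L` of a finite-dimensional real inner product space, the Voronoi cell of `0`
is a fundamental domain of `L`: a nearest point of `L` to `x` translates `x` into the cell, and two
distinct translates of the cell meet only inside a perpendicular bisector, which is a null set.
Fundamental domains of `L` all have the same measure, so the cell has the volume of the
parallelogram spanned by `1` and `τ`, namely `|det (1, τ)| = |Im τ|`; here `Im τ ≠ 0` because the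
discriminant `p² - 4q` is negative.
-/

open MeasureTheory Submodule Pointwise

section Voronoi

variable {E : Type*} [NormedAddCommGroup E]

def voronoiCell (L : AddSubgroup E) : Set E := {z | ∀ w ∈ L, ‖z‖ ≤ ‖z - w‖}

variable (L : AddSubgroup E)

theorem isClosed_voronoiCell : IsClosed (voronoiCell L) := by
  simp only [voronoiCell, Set.ofPred_forall]
  exact isClosed_biInter fun w _ ↦
    isClosed_le continuous_norm (continuous_id.sub continuous_const).norm

theorem exists_vadd_mem_voronoiCell [ProperSpace E] (hL : IsClosed (L : Set E)) (x : E) :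
    ∃ g : L, g +ᵥ x ∈ voronoiCell L := by
  obtain ⟨y, hyL, hy⟩ := hL.exists_infDist_eq_dist ⟨0, L.zero_mem⟩ x
  refine ⟨⟨-y, L.neg_mem hyL⟩, fun w hw ↦ ?_⟩
  have hnear : dist x y ≤ dist x (y + w) := hy ▸ Metric.infDist_le_dist_of_mem (L.add_mem hyL hw)
  simpa [AddSubgroup.vadd_def, dist_eq_norm, neg_add_eq_sub, sub_sub] using hnear

end Voronoi

section VoronoiInner

variable {E : Type*} [NormedAddCommGroup E] [InnerProductSpace ℝ E] (L : AddSubgroup E)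

theorem vadd_voronoiCell_inter_subset_perpBisector (g h : L) :
    (g +ᵥ voronoiCell L) ∩ (h +ᵥ voronoiCell L) ⊆
      (AffineSubspace.perpBisector (g : E) h : Set E) := by
  rintro z ⟨hg, hh⟩
  rw [Set.mem_vadd_set_iff_neg_vadd_mem] at hg hh
  have hgh := hg (h - g) (L.sub_mem h.2 g.2)
  have hhg := hh (g - h) (L.sub_mem g.2 h.2)
  simp only [AddSubgroup.vadd_def, AddSubgroup.coe_neg, vadd_eq_add, neg_add_eq_sub, sub_sub,
    add_sub_cancel] at hgh hhg
  rw [SetLike.mem_coe, AffineSubspace.mem_perpBisector_iff_dist_eq, dist_eq_norm, dist_eq_norm]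
  exact le_antisymm hgh hhg

theorem isAddFundamentalDomain_voronoiCell [FiniteDimensional ℝ E] [MeasurableSpace E]
    [BorelSpace E] (μ : Measure E) [μ.IsAddHaarMeasure] (hL : IsClosed (L : Set E)) :
    IsAddFundamentalDomain L (voronoiCell L) μ where
  nullMeasurableSet := (isClosed_voronoiCell L).measurableSet.nullMeasurableSet
  ae_covers := .of_forall (exists_vadd_mem_voronoiCell L hL)
  aedisjoint g h hgh := measure_mono_null (vadd_voronoiCell_inter_subset_perpBisector L g h)
    (Measure.addHaar_affineSubspace μ _ <| AffineSubspace.perpBisector_eq_top.not.2 <|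
      Subtype.coe_injective.ne hgh)

end VoronoiInner

namespace Complex

theorem im_ne_zero_of_sq_sub_add_eq_zero {τ : ℂ} {p q : ℝ} (hτ : τ ^ 2 - p * τ + q = 0)
    (hdisc : p ^ 2 < 4 * q) : τ.im ≠ 0 := by
  intro him
  have hre : τ.re ^ 2 - p * τ.re + q = 0 := by
    simpa [sq, him] using congrArg re hτ
  nlinarith [sq_nonneg (2 * τ.re - p)]

theorem linearIndependent_one_of_im_ne_zero {τ : ℂ} (hτ : τ.im ≠ 0) :
    LinearIndependent ℝ ![1, τ] := by
  refine LinearIndependent.pair_iff.2 fun s t hst ↦ ?_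
  have ht : t = 0 := by simpa [hτ] using congrArg im hst
  subst ht
  simpa using hst

noncomputable def basisOneOfImNeZero {τ : ℂ} (hτ : τ.im ≠ 0) : Module.Basis (Fin 2) ℝ ℂ :=
  basisOfLinearIndependentOfCardEqFinrank (linearIndependent_one_of_im_ne_zero hτ)
    (by simp)

@[simp]
theorem coe_basisOneOfImNeZero {τ : ℂ} (hτ : τ.im ≠ 0) : ⇑(basisOneOfImNeZero hτ) = ![1, τ] :=
  coe_basisOfLinearIndependentOfCardEqFinrank _ _

theorem basisOneI_det_basisOneOfImNeZero {τ : ℂ} (hτ : τ.im ≠ 0) :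
    basisOneI.det (basisOneOfImNeZero hτ) = τ.im := by
  simp [Module.Basis.det_apply, Matrix.det_fin_two, Module.Basis.toMatrix_apply]

theorem volume_fundamentalDomain_basisOneI : volume (ZSpan.fundamentalDomain basisOneI) = 1 := by
  rw [measure_congr (ZSpan.fundamentalDomain_ae_parallelepiped _ volume),
    ← toBasis_orthonormalBasisOneI, OrthonormalBasis.coe_toBasis,
    OrthonormalBasis.volume_parallelepiped]

end Complex

theorem measure_voronoiCell_span_eq_measure_fundamentalDomain {E ι : Type*}
    [NormedAddCommGroup E] [InnerProductSpace ℝ E] [FiniteDimensional ℝ E] [MeasurableSpace E]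
    [BorelSpace E] [Finite ι] (μ : Measure E) [μ.IsAddHaarMeasure] (b : Module.Basis ι ℝ E) :
    μ (voronoiCell (span ℤ (Set.range b)).toAddSubgroup) = μ (ZSpan.fundamentalDomain b) :=
  have : Countable (span ℤ (Set.range b)).toAddSubgroup := inferInstanceAs (Countable (span ℤ _))
  (isAddFundamentalDomain_voronoiCell _ μ AddSubgroup.isClosed_of_discrete).measure_eq
    (ZSpan.isAddFundamentalDomain' b μ)

/-- Let `τ` be an imaginary quadratic algebraic integer and `V` the Voronoi cell of `0` for
the lattice `ℤ[τ] = ℤ + ℤτ`. Then the Lebesgue measure of `V` equals `|Im τ|`. -/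
theorem voronoi_cell_volume (p q : ℤ) (τ : ℂ)
    (hτ : τ ^ 2 - (p : ℂ) * τ + (q : ℂ) = 0) (hdisc : p ^ 2 < 4 * q) :
    MeasureTheory.volume
      {z : ℂ | ∀ a b : ℤ, ‖z‖ ≤ ‖z - ((a : ℂ) + (b : ℂ) * τ)‖} =
    ENNReal.ofReal |τ.im| := by
  have him : τ.im ≠ 0 := Complex.im_ne_zero_of_sq_sub_add_eq_zero (p := p) (q := q)
    (by exact_mod_cast hτ) (by exact_mod_cast hdisc)
  set b := Complex.basisOneOfImNeZero him
  have hcell : {z : ℂ | ∀ a b : ℤ, ‖z‖ ≤ ‖z - ((a : ℂ) + (b : ℂ) * τ)‖} =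
      voronoiCell (span ℤ (Set.range b)).toAddSubgroup := by
    ext z
    simp only [b, voronoiCell, Complex.coe_basisOneOfImNeZero, Matrix.range_cons_cons_empty,
      Set.mem_ofPred_eq, mem_toAddSubgroup, mem_span_pair, zsmul_eq_mul, mul_one,
      forall_exists_index]
    exact ⟨fun h _ a c hw ↦ hw ▸ h a c, fun h a c ↦ h _ a c rfl⟩
  rw [hcell, measure_voronoiCell_span_eq_measure_fundamentalDomain,
    ZSpan.measure_fundamentalDomain b volume Complex.basisOneI,
    Complex.volume_fundamentalDomain_basisOneI, Complex.basisOneI_det_basisOneOfImNeZero, mul_one]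
end
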